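/- Let a, a' ∈ F and b, b' ∈ F^×. Set n = [1,a] ⊥ b·[1,a] (the norm form of the quaternion algebra [a,b)), n' = [1,a'] ⊥ b'·[1,a'] (the norm form of [a',b')), and n'⁰ = ⟨1⟩ ⊥ b'·[1,a'] (the restriction of the norm form of [a',b') to pure quaternions). Suppose μ ∈ F^× is represented by the Albert form [1, a+a'] ⊥ b·[1,a] ⊥ b'·[1,a'], and that n' ⊥ μ·n' is hyperbolic (i.e. isometric to 4×ℍ). Then there exists c ∈ F^× that is represented by both μ·n and n'⁰. -/

import Mathlib

/-!
Since `n' ⊥ μn'` is hyperbolic it has a totally isotropic subspace of dimension 4. Either this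
subspace meets the first summand, and then `n'` is isotropic, or it is the graph of a similarity
`σ` of `n'` with multiplier `μ` (signs are irrelevant in characteristic 2). An isotropic `n'`
makes `n'⁰` isotropic. In the other case write the Albert vector as `(x,y; z,w; u,v)`: for
`p = (λ, νy; νu, νv)` the vector `((λ+νx, νy; νz, νw), νμ, σ p)` is isotropic for
`μn ⊥ ⟨1⟩ ⊥ n'`, and choosing `(λ,ν) ≠ 0` with the second coordinate of `σ p` zero folds
`⟨1⟩ ⊥ [1,a']` into `⟨1⟩`, which gives an isotropic vector of `μn ⊥ n'⁰`. Finally an isotropic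
vector of `μn ⊥ n'⁰` gives a common value: its two halves take the same value, and if that value
is `0` then `n` or `n'⁰` is isotropic, hence universal.
-/

/-- The binary quadratic form `[b₁,b₂] : (x,y) ↦ b₁x² + xy + b₂y²` on `F × F`. -/
def binQF (F : Type*) [Field F] (b₁ b₂ : F) : QuadraticForm F (F × F) :=
  LinearMap.BilinMap.toQuadraticMap (LinearMap.mk₂ F
    (fun p q : F × F => b₁ * (p.1 * q.1) + p.1 * q.2 + b₂ * (p.2 * q.2))
    (fun p p' q => by simp only [Prod.fst_add, Prod.snd_add]; ring)
    (fun a p q => by simp only [Prod.smul_fst, Prod.smul_snd, smul_eq_mul]; ring)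
    (fun p q q' => by simp only [Prod.fst_add, Prod.snd_add]; ring)
    (fun a p q => by simp only [Prod.smul_fst, Prod.smul_snd, smul_eq_mul]; ring))

open QuadraticMap

namespace QuadraticMap

variable {K M M₁ M₂ N : Type*} [Field K] [AddCommGroup M] [Module K M] [AddCommGroup M₁]
  [Module K M₁] [AddCommGroup M₂] [Module K M₂] [AddCommGroup N] [Module K N]

theorem surjective_of_polar_ne_zero (Q : QuadraticForm K M) {v w : M} (hv : Q v = 0)
    (hvw : polar Q v w ≠ 0) : Function.Surjective Q := by
  intro c
  refine ⟨((c - Q w) / polar Q v w) • v + w, ?_⟩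
  rw [QuadraticMap.map_add (⇑Q), QuadraticMap.map_smul, hv, polar_smul_left, smul_eq_mul,
    smul_eq_mul]
  field_simp
  ring

theorem not_anisotropic_or_exists_linearMap [FiniteDimensional K N] [FiniteDimensional K M₂]
    (Q₁ : QuadraticForm K M₁) (Q₂ : QuadraticForm K M₂) (ι : N →ₗ[K] M₁ × M₂)
    (hι : Function.Injective ι) (hdim : Module.finrank K N = Module.finrank K M₂)
    (hιQ : ∀ g, (Q₁.prod Q₂) (ι g) = 0) :
    ¬Q₁.Anisotropic ∨ ∃ σ : M₂ →ₗ[K] M₁, ∀ p, Q₁ (σ p) + Q₂ p = 0 := by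
  by_cases hπ : Function.Injective (LinearMap.snd K M₁ M₂ ∘ₗ ι)
  · let e := LinearEquiv.ofBijective _
      ⟨hπ, (LinearMap.injective_iff_surjective_of_finrank_eq_finrank hdim).1 hπ⟩
    refine .inr ⟨LinearMap.fst K M₁ M₂ ∘ₗ ι ∘ₗ e.symm.toLinearMap, fun p => ?_⟩
    have hp : (ι (e.symm p)).2 = p := e.apply_symm_apply p
    simpa [hp] using hιQ (e.symm p)
  · refine .inl fun hQ₁ => hπ ((injective_iff_map_eq_zero _).2 fun g hg => hι ?_)
    have hg2 : (ι g).2 = 0 := hg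
    have hg1 : (ι g).1 = 0 := hQ₁ _ (by simpa [hg2] using hιQ g)
    rw [map_zero]
    exact Prod.ext hg1 hg2

end QuadraticMap

theorem exists_ne_zero_mul_add_mul_eq_zero {F : Type*} [Field F] (c d : F) :
    ∃ l m : F, (l, m) ≠ 0 ∧ l * c + m * d = 0 := by
  by_cases hc : c = 0
  · exact ⟨1, 0, by simp, by simp [hc]⟩
  · exact ⟨d, -c, by simp [hc], by ring⟩

section BinQF

variable {F : Type*} [Field F]

theorem binQF_apply (b₁ b₂ : F) (p : F × F) :
    binQF F b₁ b₂ p = b₁ * p.1 ^ 2 + p.1 * p.2 + b₂ * p.2 ^ 2 := by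
  simp [binQF, LinearMap.BilinMap.toQuadraticMap_apply]
  ring

theorem polar_binQF (b₁ b₂ : F) (p q : F × F) :
    polar (binQF F b₁ b₂) p q
      = 2 * b₁ * p.1 * q.1 + p.1 * q.2 + p.2 * q.1 + 2 * b₂ * p.2 * q.2 := by
  simp only [polar, binQF_apply, Prod.fst_add, Prod.snd_add]
  ring

theorem binQF_one_mul_binQF_one (a : F) (p q : F × F) :
    binQF F 1 a p * binQF F 1 a q
      = binQF F 1 a (p.1 * q.1 - a * p.2 * q.2, p.1 * q.2 + p.2 * q.1 + p.2 * q.2) := by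
  simp only [binQF_apply]
  ring

variable [CharP F 2]

theorem exists_polar_binQF_ne_zero (b₁ b₂ : F) {p : F × F} (hp : p ≠ 0) :
    ∃ q, polar (binQF F b₁ b₂) p q ≠ 0 := by
  have h2 : (2 : F) = 0 := CharTwo.two_eq_zero
  by_cases hp2 : p.2 = 0
  · have hp1 : p.1 ≠ 0 := fun hp1 => hp (Prod.ext hp1 hp2)
    exact ⟨(0, 1), by simpa [polar_binQF, h2] using hp1⟩
  · exact ⟨(1, 0), by simpa [polar_binQF, h2] using hp2⟩

theorem surjective_binQF_of_not_anisotropic {b₁ b₂ : F} (h : ¬(binQF F b₁ b₂).Anisotropic) :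
    Function.Surjective (binQF F b₁ b₂) := by
  obtain ⟨p, hp, hp0⟩ := (not_anisotropic_iff_exists _).1 h
  obtain ⟨q, hq⟩ := exists_polar_binQF_ne_zero b₁ b₂ hp
  exact surjective_of_polar_ne_zero _ hp0 hq

end BinQF

theorem exists_injective_isotropic_of_equivalent_hyperbolic {F M : Type*} [Field F]
    [AddCommGroup M] [Module F M] {Q : QuadraticForm F M} {k : ℕ}
    (h : Q.Equivalent (QuadraticMap.pi fun _ : Fin k => binQF F 0 0)) :
    ∃ ι : (Fin k → F) →ₗ[F] M, Function.Injective ι ∧ ∀ g, Q (ι g) = 0 := by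
  obtain ⟨iso⟩ := h
  let φ : (Fin k → F) →ₗ[F] (Fin k → F × F) :=
    LinearMap.pi fun i => LinearMap.inl F F F ∘ₗ LinearMap.proj i
  have hφ : Function.Injective φ := fun g g' h =>
    funext fun i => by simpa [φ] using congrFun h i
  refine ⟨iso.symm.toLinearEquiv.toLinearMap ∘ₗ φ, iso.symm.injective.comp hφ, fun g => ?_⟩
  change Q (iso.symm (φ g)) = 0
  rw [iso.symm.map_app]
  simp [φ, pi_apply, binQF_apply]

abbrev normForm (F : Type*) [Field F] (a b : F) : QuadraticForm F ((F × F) × (F × F)) :=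
  (binQF F 1 a).prod (b • binQF F 1 a)

abbrev pureNormForm (F : Type*) [Field F] (a b : F) : QuadraticForm F (F × (F × F)) :=
  (QuadraticMap.sq : QuadraticForm F F).prod (b • binQF F 1 a)

abbrev albertForm (F : Type*) [Field F] (a a' b b' : F) :
    QuadraticForm F ((F × F) × ((F × F) × (F × F))) :=
  (binQF F 1 (a + a')).prod ((b • binQF F 1 a).prod (b' • binQF F 1 a'))

section CharTwo

variable {F : Type*} [Field F] [CharP F 2] {a a' b b' mu : F}

theorem surjective_normForm_of_not_anisotropic (hb : b ≠ 0)
    (h : ¬(normForm F a b).Anisotropic) : Function.Surjective (normForm F a b) := by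
  obtain ⟨v, hv, hv0⟩ := (not_anisotropic_iff_exists _).1 h
  by_cases hv1 : v.1 = 0
  · have hv2 : v.2 ≠ 0 := fun hv2 => hv (Prod.ext hv1 hv2)
    obtain ⟨w, hw⟩ := exists_polar_binQF_ne_zero 1 a hv2
    exact surjective_of_polar_ne_zero _ hv0 (w := (0, w)) (by simpa [polar_smul, hb] using hw)
  · obtain ⟨w, hw⟩ := exists_polar_binQF_ne_zero 1 a hv1
    exact surjective_of_polar_ne_zero _ hv0 (w := (w, 0)) (by simpa [polar_smul] using hw)

theorem surjective_pureNormForm_of_not_anisotropic (hb : b ≠ 0)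
    (h : ¬(pureNormForm F a b).Anisotropic) : Function.Surjective (pureNormForm F a b) := by
  obtain ⟨v, hv, hv0⟩ := (not_anisotropic_iff_exists _).1 h
  have hv2 : v.2 ≠ 0 := by
    rintro hv2
    have : v.1 ^ 2 = 0 := by simpa [hv2, pow_two] using hv0
    exact hv (Prod.ext (pow_eq_zero_iff two_ne_zero |>.1 this) hv2)
  obtain ⟨w, hw⟩ := exists_polar_binQF_ne_zero 1 a hv2
  exact surjective_of_polar_ne_zero _ hv0 (w := (0, w)) (by simpa [polar_smul, hb] using hw)

theorem not_anisotropic_pureNormForm (hb : b ≠ 0) (h : ¬(normForm F a b).Anisotropic) :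
    ¬(pureNormForm F a b).Anisotropic := by
  obtain ⟨⟨p, q⟩, hpq, hiso⟩ := (not_anisotropic_iff_exists _).1 h
  have hpq0 : binQF F 1 a p = b * binQF F 1 a q := CharTwo.add_eq_zero.1 hiso
  rw [not_anisotropic_iff_exists]
  by_cases hp : binQF F 1 a p = 0
  · have hq : binQF F 1 a q = 0 := by simpa [hp, hb] using hpq0
    by_cases hq0 : q = 0
    · have hp0 : p ≠ 0 := fun hp0 => hpq (Prod.ext hp0 hq0)
      obtain ⟨r, hr⟩ := surjective_binQF_of_not_anisotropic
        ((not_anisotropic_iff_exists _).2 ⟨p, hp0, hp⟩) b⁻¹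
      refine ⟨(1, r), by simp, ?_⟩
      simp [hr, hb, CharTwo.add_self_eq_zero]
    · exact ⟨(0, q), by simpa using hq0, by simp [hq]⟩
  · -- With `N = [1,a]` multiplicative, `N(p)² + b N(pq) = N(p) (N(p) + b N(q)) = 0`.
    refine ⟨(binQF F 1 a p, (p.1 * q.1 - a * p.2 * q.2, p.1 * q.2 + p.2 * q.1 + p.2 * q.2)),
      by simp [hp], ?_⟩
    simp only [prod_apply, sq_apply, smul_apply, smul_eq_mul, ← binQF_one_mul_binQF_one, hpq0]
    linear_combination (b * binQF F 1 a q) ^ 2 * (CharTwo.two_eq_zero : (2 : F) = 0)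

theorem exists_common_value_of_not_anisotropic (hb : b ≠ 0) (hb' : b' ≠ 0) (hmu : mu ≠ 0)
    (h : ¬((mu • normForm F a b).prod (pureNormForm F a' b')).Anisotropic) :
    ∃ c : F, c ≠ 0 ∧ (∃ v, (mu • normForm F a b) v = c) ∧ ∃ w, pureNormForm F a' b' w = c := by
  obtain ⟨⟨v, w⟩, hvw, hiso⟩ := (not_anisotropic_iff_exists _).1 h
  have hvw0 : (mu • normForm F a b) v = pureNormForm F a' b' w := CharTwo.add_eq_zero.1 hiso
  by_cases hw : pureNormForm F a' b' w = 0
  · have hv : normForm F a b v = 0 := by simpa [hw, hmu] using hvw0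
    by_cases hv0 : v = 0
    · have hw0 : w ≠ 0 := fun hw0 => hvw (Prod.ext hv0 hw0)
      obtain ⟨w', hw'⟩ := surjective_pureNormForm_of_not_anisotropic hb'
        ((not_anisotropic_iff_exists _).2 ⟨w, hw0, hw⟩) mu
      exact ⟨mu, hmu, ⟨((1, 0), (0, 0)), by simp [binQF_apply]⟩, w', hw'⟩
    · obtain ⟨v', hv'⟩ := surjective_normForm_of_not_anisotropic hb
        ((not_anisotropic_iff_exists _).2 ⟨v, hv0, hv⟩) mu⁻¹
      exact ⟨1, one_ne_zero, ⟨v', by simp [hv', hmu]⟩, (1, 0), by simp⟩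
  · exact ⟨_, hw, ⟨v, hvw0⟩, w, rfl⟩

theorem not_anisotropic_of_similarity
    (σ : (F × F) × (F × F) →ₗ[F] (F × F) × (F × F))
    (hσ : ∀ p, normForm F a' b' (σ p) + (mu • normForm F a' b') p = 0)
    {x y z w u v : F} (he : albertForm F a a' b b' ((x, y), ((z, w), (u, v))) = mu) :
    ¬((mu • normForm F a b).prod (pureNormForm F a' b')).Anisotropic := by
  have h2 : (2 : F) = 0 := CharTwo.two_eq_zero
  simp only [prod_apply, smul_apply, smul_eq_mul, binQF_apply] at he
  rw [not_anisotropic_iff_exists]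
  by_cases hyzw : y = 0 ∧ z = 0 ∧ w = 0
  · obtain ⟨rfl, rfl, rfl⟩ := hyzw
    refine ⟨(((1, 0), (0, 0)), (x, (u, v))), by simp, ?_⟩
    simp only [prod_apply, smul_apply, smul_eq_mul, binQF_apply, sq_apply]
    linear_combination he + mu * h2
  set C := σ ((1, 0), (0, 0))
  set D := σ ((0, y), (u, v))
  obtain ⟨l, m, hlm, hker⟩ := exists_ne_zero_mul_add_mul_eq_zero C.1.2 D.1.2
  have hsim := hσ ((l, m * y), (m * u, m * v))
  obtain ⟨q, hq⟩ : ∃ q, σ ((l, m * y), (m * u, m * v)) = q := ⟨_, rfl⟩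
  have hq12 : q.1.2 = 0 := by
    have hP : ((l, m * y), (m * u, m * v)) = l • ((1, 0), (0, 0)) + m • ((0, y), (u, v)) := by
      ext <;> simp
    rw [← hq, hP, map_add, map_smul, map_smul]
    simpa using hker
  rw [hq] at hsim
  refine ⟨(((l + m * x, m * y), (m * z, m * w)), (m * mu + q.1.1, q.2)), ?_, ?_⟩
  · intro h0
    simp only [Prod.mk_eq_zero] at h0
    obtain ⟨⟨⟨hl, hy⟩, hz, hw⟩, -⟩ := h0
    have hm : m ≠ 0 := by
      rintro rfl
      exact hlm (by simpa using hl)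
    exact hyzw ⟨(mul_eq_zero.1 hy).resolve_left hm, (mul_eq_zero.1 hz).resolve_left hm,
      (mul_eq_zero.1 hw).resolve_left hm⟩
  · simp only [prod_apply, smul_apply, smul_eq_mul, binQF_apply, sq_apply] at hsim ⊢
    rw [hq12] at hsim
    linear_combination hsim + mu * m ^ 2 * he
      + mu * m * (l * x + q.1.1 + m * (mu - a' * y ^ 2 - b' * (u ^ 2 + u * v + a' * v ^ 2))) * h2

end CharTwo

/-- over a field of characteristic 2, with `n = [1,a] ⊥ b·[1,a]` the norm form
of `[a,b)`, `n' = [1,a'] ⊥ b'·[1,a']` the norm form of `[a',b')`, and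
`n'⁰ = ⟨1⟩ ⊥ b'·[1,a']` its restriction to pure quaternions: if `μ ∈ F^×` is represented
by the Albert form `[1,a+a'] ⊥ b·[1,a] ⊥ b'·[1,a']` and `n' ⊥ μ·n'` is hyperbolic
(`≃ 4×ℍ`), then some `c ∈ F^×` is represented by both `μ·n` and `n'⁰`. -/
theorem stmt12 (F : Type*) [Field F] [CharP F 2] (a a' b b' : F)
    (hb : b ≠ 0) (hb' : b' ≠ 0) (mu : F) (hmu : mu ≠ 0)
    (hrep : ∃ v : (F × F) × ((F × F) × (F × F)),
      ((binQF F 1 (a + a')).prod ((b • binQF F 1 a).prod (b' • binQF F 1 a'))) v = mu)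
    (hhyp : QuadraticMap.Equivalent
      (((binQF F 1 a').prod (b' • binQF F 1 a')).prod
        (mu • ((binQF F 1 a').prod (b' • binQF F 1 a'))))
      (QuadraticMap.pi (fun _ : Fin 4 => binQF F 0 0))) :
    ∃ c : F, c ≠ 0 ∧
      (∃ v : (F × F) × (F × F), (mu • ((binQF F 1 a).prod (b • binQF F 1 a))) v = c) ∧
      (∃ w : F × (F × F),
        ((QuadraticMap.sq : QuadraticForm F F).prod (b' • binQF F 1 a')) w = c) := by
  obtain ⟨⟨⟨x, y⟩, ⟨z, w⟩, ⟨u, v⟩⟩, he⟩ := hrep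
  obtain ⟨ι, hι, hιQ⟩ := exists_injective_isotropic_of_equivalent_hyperbolic hhyp
  refine exists_common_value_of_not_anisotropic hb hb' hmu ?_
  rcases not_anisotropic_or_exists_linearMap _ _ ι hι (by simp) hιQ with hiso | ⟨σ, hσ⟩
  · exact fun h => not_anisotropic_pureNormForm hb' hiso (anisotropic_of_prod h).2
  · exact not_anisotropic_of_similarity σ hσ he
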